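/- Unshredding is left inverse to shredding for nested values: define by mutual recursion on nested types A the shredding sᶠ_A : A → Aᶠ (replacing every inner bag by a fresh label via an injective bag-indexing function D) together with the context sᴳ_A (a tuple of dictionaries mapping each label to the shredded contents of its bag), and the unshredding u_A[Γ] : Aᶠ → A (replacing labels by the nested value obtained by recursively unshredding their dictionary entries). Then for every value a : A, u_A[sᴳ_A](sᶠ_A(a)) = a. -/

import Mathlib

/-- Nested relational types. -/
inductive CTy : Type where
  | base : CTy
  | prod (a b : CTy) : CTy
  | bag (c : CTy) : CTy

/-- Nested values: bags are finite multisets. -/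
def Val : CTy → Type
  | .base => ℕ
  | .prod a b => Val a × Val b
  | .bag c => Multiset (Val c)

section Shredding

-- The label type.
variable (L : Type)

/-- Shredded (flat) types: every inner bag is replaced by a label. -/
def ValF : CTy → Type
  | .base => ℕ
  | .prod a b => ValF a × ValF b
  | .bag _ => L

/-- Shredding contexts: a dictionary for each bag nesting level, mapping
labels to the (shredded) contents of the bag they stand for. -/
def Ctx : CTy → Type
  | .base => Unit
  | .prod a b => Ctx a × Ctx b
  | .bag c => (L → Multiset (ValF L c)) × Ctx c

variable {L}
-- `D` indexes every inner bag value by a label, with inverse `Dinv`.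
variable (D : (c : CTy) → Multiset (Val c) → L)
variable (Dinv : (c : CTy) → L → Multiset (Val c))

/-- Shredding of values: replace every inner bag by its label. -/
def shredF : (t : CTy) → Val t → ValF L t
  | .base, x => x
  | .prod a b, v => (shredF a v.1, shredF b v.2)
  | .bag c, v => D c v

/-- The shredding context: each label is mapped to the bag of shredded
elements of the bag it stands for. -/
def shredG : (t : CTy) → Ctx L t
  | .base => ()
  | .prod a b => (shredG a, shredG b)
  | .bag c => (fun l => (Dinv c l).map (shredF D c), shredG c)

/-- Unshredding: replace each label by the nested value obtained by
recursively unshredding its dictionary entry. -/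
def unshred : (t : CTy) → Ctx L t → ValF L t → Val t
  | .base, _, x => x
  | .prod a b, g, x => (unshred a g.1 x.1, unshred b g.2 x.2)
  | .bag c, g, l => (g.1 l).map (unshred c g.2)

/-- unshredding is left inverse to shredding: assuming `Dinv`
inverts the (injective) bag-indexing function `D`, for every nested value
`a : A` we have `u_A[sᴳ_A](sᶠ_A(a)) = a`. -/
theorem unshred_shred
    (hinv : ∀ (c : CTy) (v : Multiset (Val c)), Dinv c (D c v) = v)
    (t : CTy) (a : Val t) :
    unshred t (shredG D Dinv t) (shredF D t a) = a := by
  induction t with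
  | base => rfl
  | prod t₁ t₂ ih₁ ih₂ => exact Prod.ext (ih₁ a.1) (ih₂ a.2)
  | bag c ih =>
    change Multiset (Val c) at a
    show ((Dinv c (D c a)).map (shredF D c)).map (unshred c (shredG D Dinv c)) = a
    calc _ = (Dinv c (D c a)).map (unshred c (shredG D Dinv c) ∘ shredF D c) :=
          Multiset.map_map _ _ _
      _ = a.map (unshred c (shredG D Dinv c) ∘ shredF D c) := by rw [hinv]
      _ = a.map id := Multiset.map_congr rfl fun x _ => ih x
      _ = a := Multiset.map_id a

end Shredding
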